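/- Every lattice L is isomorphic to the lattice L* whose elements are the sets f(a) = {X ∈ F(L) : a ∈ X} for a ∈ L (where F(L) is the set of all filters of L), with meet given by set intersection and join given by A ∨* B = A ∪ B ∪ {Z ∈ F(L) : ∃ X ∈ A, ∃ Y ∈ B, X ∩ Y ⊆ Z}; the isomorphism is given by f. -/
import Mathlib


def IsLatFilter {L : Type*} [Lattice L] (X : Set L) : Prop :=
  X.Nonempty ∧ (∀ a b : L, a ∈ X → a ≤ b → b ∈ X) ∧ (∀ a b : L, a ∈ X → b ∈ X → a ⊓ b ∈ X)

def fLat {L : Type*} [Lattice L] (a : L) : Set (Set L) := {X | IsLatFilter X ∧ a ∈ X}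

def joinStar {L : Type*} [Lattice L] (A B : Set (Set L)) : Set (Set L) :=
  A ∪ B ∪ {Z | IsLatFilter Z ∧ ∃ X ∈ A, ∃ Y ∈ B, X ∩ Y ⊆ Z}

lemma principal_filter {L : Type*} [Lattice L] (a : L) :
    IsLatFilter {x : L | a ≤ x} :=
  ⟨⟨a, le_refl a⟩, fun _ _ h h' => le_trans h h', fun _ _ h h' => le_inf h h'⟩

theorem lattice_representation {L : Type*} [Lattice L] :
    Function.Injective (fun a : L => fLat a) ∧
    (∀ a b : L, fLat (a ⊓ b) = fLat a ∩ fLat b) ∧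
    (∀ a b : L, fLat (a ⊔ b) = joinStar (fLat a) (fLat b)) := by
  refine ⟨?_, ?_, ?_⟩
  · intro a b h
    simp only at h
    have h1 : ({x : L | a ≤ x} : Set L) ∈ fLat a := ⟨principal_filter a, le_refl a⟩
    have h2 : ({x : L | b ≤ x} : Set L) ∈ fLat b := ⟨principal_filter b, le_refl b⟩
    rw [h] at h1
    rw [← h] at h2
    exact le_antisymm h1.2 h2.2
  · intro a b
    ext X
    constructor
    · rintro ⟨hX, hab⟩
      exact ⟨⟨hX, hX.2.1 _ _ hab inf_le_left⟩, ⟨hX, hX.2.1 _ _ hab inf_le_right⟩⟩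
    · rintro ⟨⟨hX, ha⟩, ⟨_, hb⟩⟩
      exact ⟨hX, hX.2.2 _ _ ha hb⟩
  · intro a b
    ext Z
    constructor
    · rintro ⟨hZ, hab⟩
      refine Or.inr ⟨hZ, {x : L | a ≤ x}, ⟨principal_filter a, le_refl a⟩,
        {x : L | b ≤ x}, ⟨principal_filter b, le_refl b⟩, ?_⟩
      rintro z ⟨hza, hzb⟩
      exact hZ.2.1 _ _ hab (sup_le hza hzb)
    · intro h
      simp only [joinStar, Set.mem_union, Set.mem_setOf_eq] at h
      rcases h with (⟨hZ, ha⟩ | ⟨hZ, hb⟩) | ⟨hZ, X, ⟨hX, haX⟩, Y, ⟨hY, hbY⟩, hsub⟩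
      · exact ⟨hZ, hZ.2.1 _ _ ha le_sup_left⟩
      · exact ⟨hZ, hZ.2.1 _ _ hb le_sup_right⟩
      · exact ⟨hZ, hsub ⟨hX.2.1 _ _ haX le_sup_left, hY.2.1 _ _ hbY le_sup_right⟩⟩
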